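/- In the multidimensional elephant random walk with stops, for every n ≥ 1 one has E(‖X_{n+1}‖² | G_n) = ((1−r)/n)·Z_n* almost surely, and consequently E(Z_{n+1}* | G_n) = (1 + (1−r)/n)·Z_n* almost surely and E(Z_n*) = Γ(n+1−r)/(Γ(2−r)·Γ(n)) for all n ≥ 1, where Γ denotes the Gamma function. -/

import Mathlib

open MeasureTheory ProbabilityTheory Filter

noncomputable section

/-- The `d × d` cyclic permutation matrix `J_d` with ones on the superdiagonal and in
position `(d, 1)`. -/
def cyclicMatrix (d : ℕ) : Matrix (Fin d) (Fin d) ℝ :=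
  Matrix.of fun i j => if (j : ℕ) = ((i : ℕ) + 1) % d then 1 else 0

/-- A matrix is measurable entrywise. -/
instance {m n : Type*} : MeasurableSpace (Matrix m n ℝ) :=
  inferInstanceAs (MeasurableSpace (m → n → ℝ))

/-- The multidimensional elephant random walk with stops, with memory parameters
`p`, `q`, `r` satisfying `p + (2d-1)q + r = 1`. -/
structure MERWStops {Ω : Type*} [MeasurableSpace Ω] (P : Measure Ω)
    (d : ℕ) (p q r : ℝ) where
  X : ℕ → Ω → EuclideanSpace ℝ (Fin d)
  A : ℕ → Ω → Matrix (Fin d) (Fin d) ℝ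
  β : ℕ → Ω → ℕ
  hd : 1 ≤ d
  hp : p ∈ Set.Icc (0 : ℝ) 1
  hq : q ∈ Set.Icc (0 : ℝ) 1
  hr : r ∈ Set.Icc (0 : ℝ) 1
  hpqr : p + (2 * (d : ℝ) - 1) * q + r = 1
  measX : ∀ n, Measurable (X n)
  measA : ∀ n, Measurable (A n)
  measβ : ∀ n, Measurable (β n)
  /-- `X 1` is uniformly distributed on `{± e_1, …, ± e_d}`. -/
  hX1 : ∀ i : Fin d,
    P {ω | X 1 ω = EuclideanSpace.single i (1 : ℝ)} = ENNReal.ofReal (1 / (2 * (d : ℝ))) ∧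
    P {ω | X 1 ω = -EuclideanSpace.single i (1 : ℝ)} = ENNReal.ofReal (1 / (2 * (d : ℝ)))
  /-- The recursion `X (n+1) = A (n+1) * X (β n)`. -/
  hrec : ∀ n, 1 ≤ n → ∀ ω, ∀ i, X (n + 1) ω i = ∑ j, A (n + 1) ω i j * X (β n ω) ω j
  /-- `β n` is uniformly distributed on `{1, …, n}`. -/
  hβ : ∀ n, 1 ≤ n → ∀ k ∈ Finset.Icc 1 n, P {ω | β n ω = k} = ENNReal.ofReal (1 / (n : ℝ))
  hAI : ∀ n, 1 ≤ n → P {ω | A (n + 1) ω = 1} = ENNReal.ofReal p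
  hAnegI : ∀ n, 1 ≤ n → P {ω | A (n + 1) ω = -1} = ENNReal.ofReal q
  hAJ : ∀ n, 1 ≤ n → ∀ i ∈ Finset.Icc 1 (d - 1),
    P {ω | A (n + 1) ω = cyclicMatrix d ^ i} = ENNReal.ofReal q
  hAnegJ : ∀ n, 1 ≤ n → ∀ i ∈ Finset.Icc 1 (d - 1),
    P {ω | A (n + 1) ω = -(cyclicMatrix d ^ i)} = ENNReal.ofReal q
  hAzero : ∀ n, 1 ≤ n → P {ω | A (n + 1) ω = 0} = ENNReal.ofReal r
  /-- `A (n+1)`, `β n` and `σ(X_1, …, X_n)` are mutually independent. -/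
  hindep : ∀ n, 1 ≤ n →
    iIndep
      ![MeasurableSpace.comap (A (n + 1)) inferInstance,
        MeasurableSpace.comap (β n) inferInstance,
        ⨆ k ∈ Finset.Icc 1 n, MeasurableSpace.comap (X k) inferInstance] P

namespace MERWStops

variable {Ω : Type*} [MeasurableSpace Ω] {P : Measure Ω} {d : ℕ} {p q r : ℝ}

/-- The number of moves up to time `n` : `Z_n* = ∑_{k=1}^n ‖X_k‖²`. -/
def Zstar (W : MERWStops P d p q r) (n : ℕ) (ω : Ω) : ℝ :=
  ∑ k ∈ Finset.Icc 1 n, ‖W.X k ω‖ ^ 2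

/-- The σ-field `G_n = σ(X_1, …, X_n)`. -/
def G (W : MERWStops P d p q r) (n : ℕ) : MeasurableSpace Ω :=
  ⨆ k ∈ Finset.Icc 1 n, MeasurableSpace.comap (W.X k) inferInstance

/-- The normalizing sequence `a_1 = 1`, `a_n = ∏_{k=1}^{n-1} (1 + (1-r)/k)`. -/
def aseq (r : ℝ) (n : ℕ) : ℝ :=
  ∏ k ∈ Finset.Icc 1 (n - 1), (1 + (1 - r) / (k : ℝ))

end MERWStops

/-!
Every nonzero value of `A_{n+1}` is a signed cyclic permutation matrix, hence an isometry, and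
a.s. `A_{n+1}` takes one of these values or `0`. So a.s.
`‖X_{n+1}‖² = ∑_{k ≤ n} 1{β(n) = k, A_{n+1} ≠ 0} ‖X_k‖²`. Since `(A_{n+1}, β(n))` is independent
of `G_n`, each term has conditional expectation `P(β(n) = k, A_{n+1} ≠ 0) ‖X_k‖²
= ((1 - r) / n) ‖X_k‖²`. Adding `Z_n*` gives the second claim; taking expectations gives
`E Z_{n+1}* = (1 + (1 - r) / n) E Z_n*`, which `Γ(z + 1) = z Γ(z)` solves.
-/

open Equiv Matrix

instance {m n : Type*} [Countable m] [Countable n] :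
    MeasurableSingletonClass (Matrix m n ℝ) :=
  inferInstanceAs (MeasurableSingletonClass (m → n → ℝ))

lemma cyclicMatrix_eq_permMatrix (d : ℕ) [NeZero d] :
    cyclicMatrix d = (Equiv.addRight (1 : Fin d)).permMatrix ℝ := by
  ext i j
  simp [cyclicMatrix, PEquiv.toMatrix_apply, Fin.ext_iff, Fin.val_add, eq_comm]

open Fin.NatCast in
lemma cyclicMatrix_pow (d : ℕ) [NeZero d] (k : ℕ) :
    cyclicMatrix d ^ k = (Equiv.addRight (k : Fin d)).permMatrix ℝ := by
  induction k with
  | zero => simp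
  | succ k ih =>
    rw [pow_succ, ih, cyclicMatrix_eq_permMatrix, ← permMatrix_mul, Nat.cast_succ]
    congr 1
    ext x
    simp [add_assoc]

lemma cyclicMatrix_pow_val (d : ℕ) [NeZero d] (i : Fin d) :
    cyclicMatrix d ^ (i : ℕ) = (Equiv.addRight i).permMatrix ℝ := by
  rw [cyclicMatrix_pow, Fin.cast_val_eq_self]

/-- `signedShift d (s, i) = s • J_d ^ i` (see `cyclicMatrix_pow_val`): the `2d` nonzero values of
the `A_n`. -/
def signedShift (d : ℕ) [NeZero d] (x : ℤˣ × Fin d) : Matrix (Fin d) (Fin d) ℝ :=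
  (x.1 : ℝ) • (Equiv.addRight x.2).permMatrix ℝ

lemma signedShift_zero_apply {d : ℕ} [NeZero d] (x : ℤˣ × Fin d) :
    signedShift d x 0 = Pi.single x.2 (x.1 : ℝ) := by
  ext j
  simp [signedShift, Pi.single_apply, PEquiv.toMatrix_apply, eq_comm]

lemma single_units_injective {ι : Type*} [DecidableEq ι] :
    Function.Injective fun x : ℤˣ × ι => (Pi.single x.2 (x.1 : ℝ) : ι → ℝ) := by
  rintro ⟨s, i⟩ ⟨t, j⟩ h
  obtain rfl : i = j := by
    by_contra hij
    have := congrFun h j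
    simp only [Pi.single_eq_same, Pi.single_eq_of_ne' hij] at this
    exact Units.ne_zero t (by exact_mod_cast this.symm)
  simpa [Units.ext_iff] using congrFun h i

lemma signedShift_injective (d : ℕ) [NeZero d] : Function.Injective (signedShift d) :=
  fun x y h => single_units_injective (by simpa [signedShift_zero_apply] using congrFun h 0)

lemma signedShift_ne_zero {d : ℕ} [NeZero d] (x : ℤˣ × Fin d) : signedShift d x ≠ 0 := by
  intro h
  simpa [signedShift_zero_apply] using congrFun (congrFun h 0) x.2

lemma norm_toLp_units_smul_permMatrix_mulVec {ι : Type*} [Fintype ι] [DecidableEq ι] (s : ℤˣ)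
    (σ : Perm ι) (y : ι → ℝ) :
    ‖WithLp.toLp 2 (((s : ℝ) • σ.permMatrix ℝ) *ᵥ y)‖ = ‖WithLp.toLp 2 y‖ := by
  rw [smul_mulVec, permMatrix_mulVec, WithLp.toLp_smul, norm_smul]
  rcases Int.units_eq_one_or s with rfl | rfl <;>
    simp [EuclideanSpace.norm_eq, Equiv.sum_comp σ (fun i => y i ^ 2)]

lemma sum_ite_eq_add_mul_card_sub_one {ι : Type*} [Fintype ι] [DecidableEq ι] (a : ι) (p q : ℝ) :
    ∑ x, (if x = a then p else q) = p + (Fintype.card ι - 1) * q := by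
  rw [← Finset.add_sum_erase _ _ (Finset.mem_univ a), if_pos rfl,
    Finset.sum_congr rfl fun x hx => if_neg (Finset.ne_of_mem_erase hx), Finset.sum_const,
    Finset.card_erase_of_mem (Finset.mem_univ a), nsmul_eq_mul, Finset.card_univ,
    Nat.cast_pred (Fintype.card_pos_iff.mpr ⟨a⟩)]

section Probability

variable {Ω : Type*} {m m' m0 : MeasurableSpace Ω} {μ : Measure Ω}

lemma ae_exists_eq_of_sum_measure_eq_one [IsProbabilityMeasure μ] {E ι : Type*}
    [MeasurableSpace E] [MeasurableSingletonClass E] [Fintype ι] {X : Ω → E} (hX : Measurable X)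
    {v : ι → E} (hv : Function.Injective v) (h : ∑ i, μ {ω | X ω = v i} = 1) :
    ∀ᵐ ω ∂μ, ∃ i, X ω = v i := by
  have hmeas (i : ι) : MeasurableSet {ω | X ω = v i} := hX (measurableSet_singleton _)
  have hdisj : Pairwise (Function.onFun Disjoint fun i => {ω | X ω = v i}) :=
    fun i j hij => Set.disjoint_left.mpr fun ω hi hj => hij (hv (hi.symm.trans hj))
  have hunion : {ω | ∃ i, X ω = v i} = ⋃ i, {ω | X ω = v i} := Set.ofPred_exists _
  rw [ae_iff_measure_eq (hunion ▸ MeasurableSet.iUnion hmeas).nullMeasurableSet, hunion,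
    measure_iUnion hdisj hmeas, tsum_fintype, h, measure_univ]

lemma condExp_indicator_of_indep [IsFiniteMeasure μ] (hm : m ≤ m0) (hm' : m' ≤ m0)
    (hind : Indep m' m μ) {S : Set Ω} (hS : MeasurableSet[m'] S) {f : Ω → ℝ}
    (hf : StronglyMeasurable[m] f) (hfi : Integrable f μ) :
    μ[S.indicator f | m] =ᵐ[μ] fun ω => μ.real S * f ω := by
  have hS0 : MeasurableSet S := hm' S hS
  have hind_one : Integrable (S.indicator 1) μ := (integrable_const (1 : ℝ)).indicator hS0
  have hfS : S.indicator f = f * S.indicator 1 := by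
    ext ω
    by_cases hω : ω ∈ S <;> simp [hω]
  have hcond_one : μ[S.indicator 1 | m] =ᵐ[μ] fun _ => μ.real S := by
    rw [← integral_indicator_one hS0]
    exact condExp_indep_eq hm' hm (stronglyMeasurable_one.indicator hS) hind
  rw [hfS]
  filter_upwards [condExp_mul_of_stronglyMeasurable_left hf (hfS ▸ hfi.indicator hS0) hind_one,
    hcond_one] with ω h1 h2
  rw [h1, Pi.mul_apply, h2, mul_comm]

end Probability

namespace MERWStops

variable {Ω : Type*} [MeasurableSpace Ω] {P : Measure Ω} {d : ℕ} {p q r : ℝ}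
  (W : MERWStops P d p q r)

lemma neZero (W : MERWStops P d p q r) : NeZero d := ⟨by have := W.hd; omega⟩

lemma G_le (n : ℕ) : W.G n ≤ ‹MeasurableSpace Ω› :=
  iSup₂_le fun k _ => (W.measX k).comap_le

lemma measurable_X_G {n k : ℕ} (hk : k ∈ Finset.Icc 1 n) : Measurable[W.G n] (W.X k) := by
  rw [measurable_iff_comap_le]
  exact le_iSup₂ (f := fun k (_ : k ∈ Finset.Icc 1 n) =>
    MeasurableSpace.comap (W.X k) inferInstance) k hk

lemma stronglyMeasurable_norm_sq_X_G {n k : ℕ} (hk : k ∈ Finset.Icc 1 n) :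
    StronglyMeasurable[W.G n] fun ω => ‖W.X k ω‖ ^ 2 :=
  (W.measurable_X_G hk).stronglyMeasurable.norm.pow 2

lemma stronglyMeasurable_Zstar_G (n : ℕ) : StronglyMeasurable[W.G n] (W.Zstar n) :=
  Finset.stronglyMeasurable_fun_sum _ fun _ hk => W.stronglyMeasurable_norm_sq_X_G hk

lemma Zstar_succ (n : ℕ) : W.Zstar (n + 1) = W.Zstar n + fun ω => ‖W.X (n + 1) ω‖ ^ 2 := by
  ext ω
  exact Finset.sum_Icc_succ_top (by omega) _

abbrev choiceAlgebra (n : ℕ) : MeasurableSpace Ω :=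
  MeasurableSpace.comap (W.A (n + 1)) inferInstance ⊔ MeasurableSpace.comap (W.β n) inferInstance

lemma choiceAlgebra_le (n : ℕ) : W.choiceAlgebra n ≤ ‹MeasurableSpace Ω› :=
  sup_le (W.measA (n + 1)).comap_le (W.measβ n).comap_le

lemma indep_A_β {n : ℕ} (hn : 1 ≤ n) :
    Indep (MeasurableSpace.comap (W.A (n + 1)) inferInstance)
      (MeasurableSpace.comap (W.β n) inferInstance) P :=
  (W.hindep n hn).indep (i := 0) (j := 1) (by decide)

lemma indep_choiceAlgebra_G {n : ℕ} (hn : 1 ≤ n) : Indep (W.choiceAlgebra n) (W.G n) P := by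
  have h_le : ∀ i : Fin 3, ![MeasurableSpace.comap (W.A (n + 1)) inferInstance,
      MeasurableSpace.comap (W.β n) inferInstance, W.G n] i ≤ ‹MeasurableSpace Ω› := by
    intro i
    fin_cases i
    exacts [(W.measA (n + 1)).comap_le, (W.measβ n).comap_le, W.G_le n]
  have h := indep_iSup_of_disjoint h_le (W.hindep n hn)
    (S := {0, 1}) (T := {2}) (by simp [Set.disjoint_left])
  simpa [iSup_insert, iSup_singleton] using h

lemma X_succ_eq {n : ℕ} (hn : 1 ≤ n) (ω : Ω) :
    W.X (n + 1) ω = WithLp.toLp 2 (W.A (n + 1) ω *ᵥ W.X (W.β n ω) ω) := by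
  ext i
  exact W.hrec n hn ω i

def copiesStep (n k : ℕ) : Set Ω := {ω | W.β n ω = k} ∩ {ω | W.A (n + 1) ω ≠ 0}

lemma measurableSet_copiesStep (n k : ℕ) :
    MeasurableSet[W.choiceAlgebra n] (W.copiesStep n k) := by
  have hA : Measurable[W.choiceAlgebra n] (W.A (n + 1)) :=
    (comap_measurable _).mono le_sup_left le_rfl
  have hβ : Measurable[W.choiceAlgebra n] (W.β n) :=
    (comap_measurable _).mono le_sup_right le_rfl
  exact (hβ (measurableSet_singleton k)).inter (hA (measurableSet_singleton 0).compl)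

lemma measure_A_eq_signedShift [NeZero d] {n : ℕ} (hn : 1 ≤ n) (x : ℤˣ × Fin d) :
    P {ω | W.A (n + 1) ω = signedShift d x} = ENNReal.ofReal (if x = (1, 0) then p else q) := by
  obtain ⟨s, i⟩ := x
  by_cases hi : i = 0
  · subst hi
    rcases Int.units_eq_one_or s with rfl | rfl
    · simpa [signedShift] using W.hAI n hn
    · simpa [signedShift] using W.hAnegI n hn
  · have hi' : (i : ℕ) ∈ Finset.Icc 1 (d - 1) := by
      have := i.isLt
      have := Fin.val_ne_zero_iff.mpr hi
      simp only [Finset.mem_Icc]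
      omega
    rcases Int.units_eq_one_or s with rfl | rfl
    · simpa [signedShift, hi, ← cyclicMatrix_pow_val] using W.hAJ n hn i hi'
    · simpa [signedShift, hi, ← cyclicMatrix_pow_val] using W.hAnegJ n hn i hi'

variable [IsProbabilityMeasure P]

lemma ae_A_eq_zero_or_signedShift [NeZero d] {n : ℕ} (hn : 1 ≤ n) :
    ∀ᵐ ω ∂P, W.A (n + 1) ω = 0 ∨ ∃ x, W.A (n + 1) ω = signedShift d x := by
  have hv : Function.Injective fun o : Option (ℤˣ × Fin d) => o.elim 0 (signedShift d) := by
    rintro (_ | x) (_ | y) h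
    · rfl
    · exact absurd h.symm (signedShift_ne_zero y)
    · exact absurd h (signedShift_ne_zero x)
    · exact congrArg some (signedShift_injective d h)
  have hweights : r + ∑ x : ℤˣ × Fin d, (if x = (1, 0) then p else q) = 1 := by
    rw [sum_ite_eq_add_mul_card_sub_one, Fintype.card_prod, Fintype.card_units_int,
      Fintype.card_fin]
    push_cast
    linarith [W.hpqr]
  have hsum :
      ∑ o : Option (ℤˣ × Fin d), P {ω | W.A (n + 1) ω = o.elim 0 (signedShift d)} = 1 := by
    rw [Fintype.sum_option]
    simp only [Option.elim_none, Option.elim_some, W.measure_A_eq_signedShift hn]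
    rw [W.hAzero n hn, ← ENNReal.ofReal_sum_of_nonneg fun x _ => by
        split_ifs; exacts [W.hp.1, W.hq.1],
      ← ENNReal.ofReal_add W.hr.1 (Finset.sum_nonneg fun x _ => by
        split_ifs; exacts [W.hp.1, W.hq.1]), hweights, ENNReal.ofReal_one]
  filter_upwards [ae_exists_eq_of_sum_measure_eq_one (W.measA (n + 1)) hv hsum] with ω hω
  obtain ⟨_ | x, h⟩ := hω
  exacts [Or.inl h, Or.inr ⟨x, h⟩]

lemma ae_β_mem_Icc {n : ℕ} (hn : 1 ≤ n) : ∀ᵐ ω ∂P, W.β n ω ∈ Finset.Icc 1 n := by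
  have hsum : ∑ k : Finset.Icc 1 n, P {ω | W.β n ω = k} = 1 := by
    rw [Finset.sum_coe_sort (Finset.Icc 1 n) fun k => P {ω | W.β n ω = k},
      Finset.sum_congr rfl (W.hβ n hn), Finset.sum_const, Nat.card_Icc, add_tsub_cancel_right,
      nsmul_eq_mul, ← ENNReal.ofReal_natCast, ← ENNReal.ofReal_mul (Nat.cast_nonneg n),
      mul_one_div_cancel (by positivity), ENNReal.ofReal_one]
  filter_upwards [ae_exists_eq_of_sum_measure_eq_one (W.measβ n) Subtype.val_injective hsum]
    with ω ⟨k, hk⟩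
  exact hk ▸ k.2

lemma ae_norm_X_one : ∀ᵐ ω ∂P, ‖W.X 1 ω‖ = 1 := by
  have hv : Function.Injective fun x : ℤˣ × Fin d => EuclideanSpace.single x.2 (x.1 : ℝ) :=
    fun x y h => single_units_injective (congrArg WithLp.ofLp h)
  have hsum : ∑ x : ℤˣ × Fin d, P {ω | W.X 1 ω = EuclideanSpace.single x.2 (x.1 : ℝ)} = 1 := by
    have hx (x : ℤˣ × Fin d) : P {ω | W.X 1 ω = EuclideanSpace.single x.2 (x.1 : ℝ)} =
        ENNReal.ofReal (1 / (2 * d)) := by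
      rcases Int.units_eq_one_or x.1 with h | h
      · simpa [h] using (W.hX1 x.2).1
      · simpa [h, PiLp.single_neg] using (W.hX1 x.2).2
    have hd : (0 : ℝ) < d := by exact_mod_cast W.hd
    rw [Finset.sum_congr rfl fun x _ => hx x, Finset.sum_const, Finset.card_univ,
      Fintype.card_prod, Fintype.card_units_int, Fintype.card_fin, nsmul_eq_mul,
      ← ENNReal.ofReal_natCast, ← ENNReal.ofReal_mul (Nat.cast_nonneg _)]
    push_cast
    rw [mul_one_div_cancel (by positivity), ENNReal.ofReal_one]
  filter_upwards [ae_exists_eq_of_sum_measure_eq_one (W.measX 1) hv hsum] with ω ⟨x, hx⟩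
  rcases Int.units_eq_one_or x.1 with h | h <;> simp [hx, h]

lemma measureReal_copiesStep {n k : ℕ} (hn : 1 ≤ n) (hk : k ∈ Finset.Icc 1 n) :
    P.real (W.copiesStep n k) = (1 - r) / n := by
  have hA0 : MeasurableSet {ω | W.A (n + 1) ω = 0} := W.measA (n + 1) (measurableSet_singleton 0)
  have hA : P.real {ω | W.A (n + 1) ω ≠ 0} = 1 - r := by
    rw [show {ω | W.A (n + 1) ω ≠ 0} = {ω | W.A (n + 1) ω = 0}ᶜ from rfl, measureReal_compl hA0,
      probReal_univ, measureReal_def, W.hAzero n hn, ENNReal.toReal_ofReal W.hr.1]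
  have hβ : P.real {ω | W.β n ω = k} = 1 / n := by
    rw [measureReal_def, W.hβ n hn k hk, ENNReal.toReal_ofReal (by positivity)]
  rw [copiesStep, measureReal_def, (Indep_iff _ _ _).mp (W.indep_A_β hn).symm
      {ω | W.β n ω = k} {ω | W.A (n + 1) ω ≠ 0} ⟨{k}, measurableSet_singleton k, rfl⟩
      ⟨{0}ᶜ, (measurableSet_singleton 0).compl, rfl⟩,
    ENNReal.toReal_mul, ← measureReal_def, ← measureReal_def, hA, hβ]
  ring

lemma ae_norm_X_succ {n : ℕ} (hn : 1 ≤ n) :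
    ∀ᵐ ω ∂P, ‖W.X (n + 1) ω‖ = if W.A (n + 1) ω = 0 then 0 else ‖W.X (W.β n ω) ω‖ := by
  have := W.neZero
  filter_upwards [W.ae_A_eq_zero_or_signedShift hn] with ω hA
  rw [W.X_succ_eq hn]
  rcases hA with hA | ⟨x, hA⟩
  · simp [hA]
  · rw [if_neg (hA ▸ signedShift_ne_zero x), hA, signedShift,
      norm_toLp_units_smul_permMatrix_mulVec, WithLp.toLp_ofLp]

lemma norm_sq_X_succ_ae_eq {n : ℕ} (hn : 1 ≤ n) :
    (fun ω => ‖W.X (n + 1) ω‖ ^ 2) =ᵐ[P]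
      ∑ k ∈ Finset.Icc 1 n, (W.copiesStep n k).indicator fun ω => ‖W.X k ω‖ ^ 2 := by
  filter_upwards [W.ae_norm_X_succ hn, W.ae_β_mem_Icc hn] with ω hnorm hβ
  simp only [Finset.sum_apply, copiesStep, Set.indicator_apply, Set.mem_inter_iff,
    Set.mem_ofPred_eq, hnorm]
  split_ifs with hA <;> simp [hA, Finset.sum_ite_eq, hβ]

lemma integrable_norm_sq_X {k : ℕ} (hk : 1 ≤ k) : Integrable (fun ω => ‖W.X k ω‖ ^ 2) P := by
  induction k using Nat.strong_induction_on with
  | _ k ih =>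
    obtain rfl | ⟨n, hn, rfl⟩ : k = 1 ∨ ∃ n, 1 ≤ n ∧ k = n + 1 :=
      (eq_or_lt_of_le hk).imp Eq.symm fun h => ⟨k - 1, by omega, by omega⟩
    · refine (integrable_const (1 : ℝ)).congr ?_
      filter_upwards [W.ae_norm_X_one] with ω hω
      simp [hω]
    · refine (integrable_finsetSum' _ fun j hj => ?_).congr (W.norm_sq_X_succ_ae_eq hn).symm
      have hj' := Finset.mem_Icc.mp hj
      exact (ih j (by omega) hj'.1).indicator
        (W.choiceAlgebra_le n _ (W.measurableSet_copiesStep n j))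

lemma condExp_norm_sq_X_succ {n : ℕ} (hn : 1 ≤ n) :
    P[(fun ω => ‖W.X (n + 1) ω‖ ^ 2) | W.G n] =ᵐ[P] fun ω => ((1 - r) / n) * W.Zstar n ω := by
  have hint : ∀ k ∈ Finset.Icc 1 n,
      Integrable ((W.copiesStep n k).indicator fun ω => ‖W.X k ω‖ ^ 2) P := fun k hk =>
    (W.integrable_norm_sq_X (Finset.mem_Icc.mp hk).1).indicator
      (W.choiceAlgebra_le n _ (W.measurableSet_copiesStep n k))
  have hterms : ∀ᵐ ω ∂P, ∀ k ∈ Finset.Icc 1 n,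
      P[(W.copiesStep n k).indicator (fun ω => ‖W.X k ω‖ ^ 2) | W.G n] ω =
        P.real (W.copiesStep n k) * ‖W.X k ω‖ ^ 2 :=
    (eventually_all_finset _).mpr fun k hk =>
      condExp_indicator_of_indep (W.G_le n) (W.choiceAlgebra_le n) (W.indep_choiceAlgebra_G hn)
        (W.measurableSet_copiesStep n k) (W.stronglyMeasurable_norm_sq_X_G hk)
        (W.integrable_norm_sq_X (Finset.mem_Icc.mp hk).1)
  filter_upwards [condExp_congr_ae (m := W.G n) (W.norm_sq_X_succ_ae_eq hn),
    condExp_finsetSum hint (W.G n), hterms] with ω hcongr hsum hω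
  rw [hcongr, hsum, Finset.sum_apply, Zstar, Finset.mul_sum]
  refine Finset.sum_congr rfl fun k hk => ?_
  rw [hω k hk, W.measureReal_copiesStep hn hk]

lemma integrable_Zstar (n : ℕ) : Integrable (W.Zstar n) P :=
  integrable_finsetSum _ fun _ hk => W.integrable_norm_sq_X (Finset.mem_Icc.mp hk).1

lemma condExp_Zstar_succ {n : ℕ} (hn : 1 ≤ n) :
    P[W.Zstar (n + 1) | W.G n] =ᵐ[P] fun ω => (1 + (1 - r) / n) * W.Zstar n ω := by
  have hZ : P[W.Zstar n | W.G n] = W.Zstar n :=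
    condExp_of_stronglyMeasurable (W.G_le n) (W.stronglyMeasurable_Zstar_G n)
      (W.integrable_Zstar n)
  filter_upwards [condExp_add (W.integrable_Zstar n)
    (W.integrable_norm_sq_X (by omega : 1 ≤ n + 1)) (W.G n), W.condExp_norm_sq_X_succ hn]
    with ω hadd hX
  rw [Zstar_succ, hadd, Pi.add_apply, hZ, hX]
  ring

lemma integral_Zstar_succ {n : ℕ} (hn : 1 ≤ n) :
    ∫ ω, W.Zstar (n + 1) ω ∂P = (1 + (1 - r) / n) * ∫ ω, W.Zstar n ω ∂P := by
  rw [← integral_condExp (W.G_le n), integral_congr_ae (W.condExp_Zstar_succ hn),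
    integral_const_mul]

lemma integral_Zstar {n : ℕ} (hn : 1 ≤ n) :
    ∫ ω, W.Zstar n ω ∂P =
      Real.Gamma ((n : ℝ) + 1 - r) / (Real.Gamma (2 - r) * Real.Gamma (n : ℝ)) := by
  have hr := W.hr.2
  induction n, hn using Nat.le_induction with
  | base =>
    have hΓ : Real.Gamma (2 - r) ≠ 0 := (Real.Gamma_pos_of_pos (by linarith)).ne'
    rw [integral_congr_ae (g := fun _ => 1)]
    · norm_num [hΓ]
    · filter_upwards [W.ae_norm_X_one] with ω hω
      simp [Zstar, hω]
  | succ n hn ih =>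
    have hn' : (1 : ℝ) ≤ n := by exact_mod_cast hn
    rw [W.integral_Zstar_succ hn, ih, Nat.cast_succ,
      Real.Gamma_add_one (by linarith : (n : ℝ) ≠ 0),
      show (n : ℝ) + 1 + 1 - r = (n + 1 - r) + 1 by ring,
      Real.Gamma_add_one (by linarith : (n : ℝ) + 1 - r ≠ 0)]
    field_simp
    ring

end MERWStops

/-- In the MERW with stops, for every `n ≥ 1`,
`E(‖X_{n+1}‖² | G_n) = ((1-r)/n) Z_n*` a.s., hence
`E(Z_{n+1}* | G_n) = (1 + (1-r)/n) Z_n*` a.s., and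
`E(Z_n*) = Γ(n+1-r)/(Γ(2-r) Γ(n))`. -/
theorem merwStops_conditional_mean_moves
    {Ω : Type*} [MeasurableSpace Ω] {P : Measure Ω} [IsProbabilityMeasure P]
    {d : ℕ} {p q r : ℝ} (W : MERWStops P d p q r) :
    (∀ n, 1 ≤ n →
      P[(fun ω => ‖W.X (n + 1) ω‖ ^ 2) | W.G n]
        =ᵐ[P] fun ω => ((1 - r) / n) * W.Zstar n ω) ∧
    (∀ n, 1 ≤ n →
      P[W.Zstar (n + 1) | W.G n]
        =ᵐ[P] fun ω => (1 + (1 - r) / n) * W.Zstar n ω) ∧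
    (∀ n, 1 ≤ n →
      ∫ ω, W.Zstar n ω ∂P =
        Real.Gamma ((n : ℝ) + 1 - r) / (Real.Gamma (2 - r) * Real.Gamma (n : ℝ))) :=
  ⟨fun _ => W.condExp_norm_sq_X_succ, fun _ => W.condExp_Zstar_succ, fun _ => W.integral_Zstar⟩
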